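/- Let A ∈ SL(4,ℂ) be such that A is not a scalar matrix but A² is a scalar matrix, and suppose there exist c, d ∈ ℂ with F∘A = c·F and G_α∘A = d·G_α, where α = (a₀,a₁,a₂,b₀,b₁,b₂) ∈ ℂ⁶ has all six coordinates nonzero. Then there exist distinct indices i, j ∈ {0,1,2} with aᵢ²·bⱼ³ = aⱼ²·bᵢ³. (The locus in the Luna slice of cubic surfaces with an extra involution is contained, where all coordinates are nonzero, in the union of the three quintic hypersurfaces aᵢ²bⱼ³ = aⱼ²bᵢ³.) -/
import Mathlib


open MvPolynomial

set_option maxHeartbeats 10000000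

/-- The defining cubic form of the 3A₂ cubic surface: F = x₀x₁x₂ + x₃³. -/
noncomputable def F3A2 : MvPolynomial (Fin 4) ℂ :=
  X 0 * X 1 * X 2 + X 3 ^ 3

/-- The substitution action: (P∘A)(x) = P(A·x), i.e. xⱼ ↦ Σₖ Aⱼₖ·xₖ. -/
noncomputable def actM (A : Matrix (Fin 4) (Fin 4) ℂ) (P : MvPolynomial (Fin 4) ℂ) :
    MvPolynomial (Fin 4) ℂ :=
  MvPolynomial.aeval (fun j => ∑ k : Fin 4, MvPolynomial.C (A j k) * MvPolynomial.X k) P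

/-- The family of cubic forms parameterizing the Luna slice at the 3A₂ cubic:
G_α = a₀x₀³ + a₁x₁³ + a₂x₂³ + b₀x₀²x₃ + b₁x₁²x₃ + b₂x₂²x₃ + x₀x₁x₂ + x₃³. -/
noncomputable def lunaFamily (a b : Fin 3 → ℂ) : MvPolynomial (Fin 4) ℂ :=
  C (a 0) * X 0 ^ 3 + C (a 1) * X 1 ^ 3 + C (a 2) * X 2 ^ 3 +
  C (b 0) * X 0 ^ 2 * X 3 + C (b 1) * X 1 ^ 2 * X 3 + C (b 2) * X 2 ^ 2 * X 3 +
  X 0 * X 1 * X 2 + X 3 ^ 3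

lemma key3A2 (ai aj bi bj li lj m d : ℂ)
    (hm : m ≠ 0)
    (h1 : aj * li ^ 3 = d * ai) (h4 : bi * lj ^ 2 * m = d * bj)
    (h5 : m ^ 3 = d) (h6 : li * lj = m ^ 2) :
    ai ^ 2 * bj ^ 3 = aj ^ 2 * bi ^ 3 := by
  have hd : d ≠ 0 := by rw [← h5]; exact pow_ne_zero 3 hm
  have e1 : d ^ 2 * ai ^ 2 = aj ^ 2 * li ^ 6 := by
    linear_combination (-(aj * li ^ 3) - d * ai) * h1
  have e2 : d ^ 3 * bj ^ 3 = bi ^ 3 * lj ^ 6 * m ^ 3 := by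
    linear_combination (-(bi ^ 2 * lj ^ 4 * m ^ 2) - bi * lj ^ 2 * m * d * bj - d ^ 2 * bj ^ 2) * h4
  have e3 : d ^ 5 * (ai ^ 2 * bj ^ 3) = d ^ 5 * (aj ^ 2 * bi ^ 3) := by
    linear_combination d ^ 3 * bj ^ 3 * e1 + aj ^ 2 * li ^ 6 * e2
      + aj ^ 2 * bi ^ 3 * (m ^ 12 + m ^ 9 * d + m ^ 6 * d ^ 2 + m ^ 3 * d ^ 3 + d ^ 4) * h5
      + aj ^ 2 * bi ^ 3 * m ^ 3 * ((li * lj) ^ 5 + (li * lj) ^ 4 * m ^ 2 + (li * lj) ^ 3 * m ^ 4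
          + (li * lj) ^ 2 * m ^ 6 + (li * lj) * m ^ 8 + m ^ 10) * h6
  exact mul_left_cancel₀ (pow_ne_zero 5 hd) e3

/-- If A ∈ SL(4,ℂ) is not scalar but A² is scalar (so A induces an involution of ℙ³),
A stabilizes F up to scalar, and A stabilizes up to scalar a point G_α of the Luna
slice with all six coordinates nonzero, then α lies on one of the three quintic
hypersurfaces aᵢ²bⱼ³ = aⱼ²bᵢ³ (i ≠ j). -/
theorem involution_fixed_locus_in_luna_slice (A : Matrix.SpecialLinearGroup (Fin 4) ℂ)
    (hns : ¬∃ t : ℂ, (A : Matrix (Fin 4) (Fin 4) ℂ) = t • (1 : Matrix (Fin 4) (Fin 4) ℂ))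
    (hsq : ∃ t : ℂ, (A : Matrix (Fin 4) (Fin 4) ℂ) * (A : Matrix (Fin 4) (Fin 4) ℂ) =
      t • (1 : Matrix (Fin 4) (Fin 4) ℂ))
    (a b : Fin 3 → ℂ) (ha : ∀ i, a i ≠ 0) (hb : ∀ i, b i ≠ 0)
    (hF : ∃ c : ℂ, actM (A : Matrix (Fin 4) (Fin 4) ℂ) F3A2 = c • F3A2)
    (hG : ∃ d : ℂ, actM (A : Matrix (Fin 4) (Fin 4) ℂ) (lunaFamily a b) =
      d • lunaFamily a b) :
    ∃ i j : Fin 3, i ≠ j ∧ (a i) ^ 2 * (b j) ^ 3 = (a j) ^ 2 * (b i) ^ 3 := by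
  obtain ⟨c, hc⟩ := hF
  obtain ⟨d, hd⟩ := hG
  obtain ⟨t, ht⟩ := hsq
  set M : Matrix (Fin 4) (Fin 4) ℂ := (A : Matrix (Fin 4) (Fin 4) ℂ) with hMeq
  set N : Matrix (Fin 4) (Fin 4) ℂ :=
    ((A⁻¹ : Matrix.SpecialLinearGroup (Fin 4) ℂ) : Matrix (Fin 4) (Fin 4) ℂ) with hNeq
  have hMN : M * N = 1 := by
    rw [hMeq, hNeq, ← Matrix.SpecialLinearGroup.coe_mul, mul_inv_cancel,
      Matrix.SpecialLinearGroup.coe_one]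
  have hNM : N * M = 1 := by
    rw [hMeq, hNeq, ← Matrix.SpecialLinearGroup.coe_mul, inv_mul_cancel,
      Matrix.SpecialLinearGroup.coe_one]
  have hFe : ∀ x0 x1 x2 x3 : ℂ, (M 0 0 * x0 + M 0 1 * x1 + M 0 2 * x2 + M 0 3 * x3) * (M 1 0 * x0 + M 1 1 * x1 + M 1 2 * x2 + M 1 3 * x3) * (M 2 0 * x0 + M 2 1 * x1 + M 2 2 * x2 + M 2 3 * x3) + (M 3 0 * x0 + M 3 1 * x1 + M 3 2 * x2 + M 3 3 * x3) ^ 3 = c * (x0 * x1 * x2 + x3 ^ 3) := by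
    intro x0 x1 x2 x3
    have h := congrArg (MvPolynomial.eval ![x0, x1, x2, x3]) hc
    simp [actM, F3A2, Fin.sum_univ_four] at h
    linear_combination h
  have hGe : ∀ x0 x1 x2 x3 : ℂ, a 0 * (M 0 0 * x0 + M 0 1 * x1 + M 0 2 * x2 + M 0 3 * x3) ^ 3 + a 1 * (M 1 0 * x0 + M 1 1 * x1 + M 1 2 * x2 + M 1 3 * x3) ^ 3 + a 2 * (M 2 0 * x0 + M 2 1 * x1 + M 2 2 * x2 + M 2 3 * x3) ^ 3 + b 0 * (M 0 0 * x0 + M 0 1 * x1 + M 0 2 * x2 + M 0 3 * x3) ^ 2 * (M 3 0 * x0 + M 3 1 * x1 + M 3 2 * x2 + M 3 3 * x3) + b 1 * (M 1 0 * x0 + M 1 1 * x1 + M 1 2 * x2 + M 1 3 * x3) ^ 2 * (M 3 0 * x0 + M 3 1 * x1 + M 3 2 * x2 + M 3 3 * x3) + b 2 * (M 2 0 * x0 + M 2 1 * x1 + M 2 2 * x2 + M 2 3 * x3) ^ 2 * (M 3 0 * x0 + M 3 1 * x1 + M 3 2 * x2 + M 3 3 * x3) + (M 0 0 * x0 + M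 0 1 * x1 + M 0 2 * x2 + M 0 3 * x3) * (M 1 0 * x0 + M 1 1 * x1 + M 1 2 * x2 + M 1 3 * x3) * (M 2 0 * x0 + M 2 1 * x1 + M 2 2 * x2 + M 2 3 * x3) + (M 3 0 * x0 + M 3 1 * x1 + M 3 2 * x2 + M 3 3 * x3) ^ 3 = d * (a 0 * x0 ^ 3 + a 1 * x1 ^ 3 + a 2 * x2 ^ 3 + b 0 * x0 ^ 2 * x3 + b 1 * x1 ^ 2 * x3 + b 2 * x2 ^ 2 * x3 + x0 * x1 * x2 + x3 ^ 3) := by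
    intro x0 x1 x2 x3
    have h := congrArg (MvPolynomial.eval ![x0, x1, x2, x3]) hd
    simp [actM, lunaFamily, Fin.sum_univ_four] at h
    linear_combination h
  have hmn00 : M 0 0 * N 0 0 + M 0 1 * N 1 0 + M 0 2 * N 2 0 + M 0 3 * N 3 0 = 1 := by
    have h := congrFun (congrFun hMN 0) 0
    simpa [Matrix.mul_apply, Fin.sum_univ_four, Matrix.one_apply] using h
  have hmn01 : M 0 0 * N 0 1 + M 0 1 * N 1 1 + M 0 2 * N 2 1 + M 0 3 * N 3 1 = 0 := by
    have h := congrFun (congrFun hMN 0) 1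
    simpa [Matrix.mul_apply, Fin.sum_univ_four, Matrix.one_apply] using h
  have hmn02 : M 0 0 * N 0 2 + M 0 1 * N 1 2 + M 0 2 * N 2 2 + M 0 3 * N 3 2 = 0 := by
    have h := congrFun (congrFun hMN 0) 2
    simpa [Matrix.mul_apply, Fin.sum_univ_four, Matrix.one_apply] using h
  have hmn03 : M 0 0 * N 0 3 + M 0 1 * N 1 3 + M 0 2 * N 2 3 + M 0 3 * N 3 3 = 0 := by
    have h := congrFun (congrFun hMN 0) 3
    simpa [Matrix.mul_apply, Fin.sum_univ_four, Matrix.one_apply] using h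
  have hmn10 : M 1 0 * N 0 0 + M 1 1 * N 1 0 + M 1 2 * N 2 0 + M 1 3 * N 3 0 = 0 := by
    have h := congrFun (congrFun hMN 1) 0
    simpa [Matrix.mul_apply, Fin.sum_univ_four, Matrix.one_apply] using h
  have hmn11 : M 1 0 * N 0 1 + M 1 1 * N 1 1 + M 1 2 * N 2 1 + M 1 3 * N 3 1 = 1 := by
    have h := congrFun (congrFun hMN 1) 1
    simpa [Matrix.mul_apply, Fin.sum_univ_four, Matrix.one_apply] using h
  have hmn12 : M 1 0 * N 0 2 + M 1 1 * N 1 2 + M 1 2 * N 2 2 + M 1 3 * N 3 2 = 0 := by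
    have h := congrFun (congrFun hMN 1) 2
    simpa [Matrix.mul_apply, Fin.sum_univ_four, Matrix.one_apply] using h
  have hmn13 : M 1 0 * N 0 3 + M 1 1 * N 1 3 + M 1 2 * N 2 3 + M 1 3 * N 3 3 = 0 := by
    have h := congrFun (congrFun hMN 1) 3
    simpa [Matrix.mul_apply, Fin.sum_univ_four, Matrix.one_apply] using h
  have hmn20 : M 2 0 * N 0 0 + M 2 1 * N 1 0 + M 2 2 * N 2 0 + M 2 3 * N 3 0 = 0 := by
    have h := congrFun (congrFun hMN 2) 0
    simpa [Matrix.mul_apply, Fin.sum_univ_four, Matrix.one_apply] using h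
  have hmn21 : M 2 0 * N 0 1 + M 2 1 * N 1 1 + M 2 2 * N 2 1 + M 2 3 * N 3 1 = 0 := by
    have h := congrFun (congrFun hMN 2) 1
    simpa [Matrix.mul_apply, Fin.sum_univ_four, Matrix.one_apply] using h
  have hmn22 : M 2 0 * N 0 2 + M 2 1 * N 1 2 + M 2 2 * N 2 2 + M 2 3 * N 3 2 = 1 := by
    have h := congrFun (congrFun hMN 2) 2
    simpa [Matrix.mul_apply, Fin.sum_univ_four, Matrix.one_apply] using h
  have hmn23 : M 2 0 * N 0 3 + M 2 1 * N 1 3 + M 2 2 * N 2 3 + M 2 3 * N 3 3 = 0 := by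
    have h := congrFun (congrFun hMN 2) 3
    simpa [Matrix.mul_apply, Fin.sum_univ_four, Matrix.one_apply] using h
  have hmn30 : M 3 0 * N 0 0 + M 3 1 * N 1 0 + M 3 2 * N 2 0 + M 3 3 * N 3 0 = 0 := by
    have h := congrFun (congrFun hMN 3) 0
    simpa [Matrix.mul_apply, Fin.sum_univ_four, Matrix.one_apply] using h
  have hmn31 : M 3 0 * N 0 1 + M 3 1 * N 1 1 + M 3 2 * N 2 1 + M 3 3 * N 3 1 = 0 := by
    have h := congrFun (congrFun hMN 3) 1
    simpa [Matrix.mul_apply, Fin.sum_univ_four, Matrix.one_apply] using h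
  have hmn32 : M 3 0 * N 0 2 + M 3 1 * N 1 2 + M 3 2 * N 2 2 + M 3 3 * N 3 2 = 0 := by
    have h := congrFun (congrFun hMN 3) 2
    simpa [Matrix.mul_apply, Fin.sum_univ_four, Matrix.one_apply] using h
  have hmn33 : M 3 0 * N 0 3 + M 3 1 * N 1 3 + M 3 2 * N 2 3 + M 3 3 * N 3 3 = 1 := by
    have h := congrFun (congrFun hMN 3) 3
    simpa [Matrix.mul_apply, Fin.sum_univ_four, Matrix.one_apply] using h
  have hnm00 : N 0 0 * M 0 0 + N 0 1 * M 1 0 + N 0 2 * M 2 0 + N 0 3 * M 3 0 = 1 := by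
    have h := congrFun (congrFun hNM 0) 0
    simpa [Matrix.mul_apply, Fin.sum_univ_four, Matrix.one_apply] using h
  have hnm01 : N 0 0 * M 0 1 + N 0 1 * M 1 1 + N 0 2 * M 2 1 + N 0 3 * M 3 1 = 0 := by
    have h := congrFun (congrFun hNM 0) 1
    simpa [Matrix.mul_apply, Fin.sum_univ_four, Matrix.one_apply] using h
  have hnm02 : N 0 0 * M 0 2 + N 0 1 * M 1 2 + N 0 2 * M 2 2 + N 0 3 * M 3 2 = 0 := by
    have h := congrFun (congrFun hNM 0) 2
    simpa [Matrix.mul_apply, Fin.sum_univ_four, Matrix.one_apply] using h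
  have hnm03 : N 0 0 * M 0 3 + N 0 1 * M 1 3 + N 0 2 * M 2 3 + N 0 3 * M 3 3 = 0 := by
    have h := congrFun (congrFun hNM 0) 3
    simpa [Matrix.mul_apply, Fin.sum_univ_four, Matrix.one_apply] using h
  have hnm10 : N 1 0 * M 0 0 + N 1 1 * M 1 0 + N 1 2 * M 2 0 + N 1 3 * M 3 0 = 0 := by
    have h := congrFun (congrFun hNM 1) 0
    simpa [Matrix.mul_apply, Fin.sum_univ_four, Matrix.one_apply] using h
  have hnm11 : N 1 0 * M 0 1 + N 1 1 * M 1 1 + N 1 2 * M 2 1 + N 1 3 * M 3 1 = 1 := by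
    have h := congrFun (congrFun hNM 1) 1
    simpa [Matrix.mul_apply, Fin.sum_univ_four, Matrix.one_apply] using h
  have hnm12 : N 1 0 * M 0 2 + N 1 1 * M 1 2 + N 1 2 * M 2 2 + N 1 3 * M 3 2 = 0 := by
    have h := congrFun (congrFun hNM 1) 2
    simpa [Matrix.mul_apply, Fin.sum_univ_four, Matrix.one_apply] using h
  have hnm13 : N 1 0 * M 0 3 + N 1 1 * M 1 3 + N 1 2 * M 2 3 + N 1 3 * M 3 3 = 0 := by
    have h := congrFun (congrFun hNM 1) 3
    simpa [Matrix.mul_apply, Fin.sum_univ_four, Matrix.one_apply] using h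
  have hnm20 : N 2 0 * M 0 0 + N 2 1 * M 1 0 + N 2 2 * M 2 0 + N 2 3 * M 3 0 = 0 := by
    have h := congrFun (congrFun hNM 2) 0
    simpa [Matrix.mul_apply, Fin.sum_univ_four, Matrix.one_apply] using h
  have hnm21 : N 2 0 * M 0 1 + N 2 1 * M 1 1 + N 2 2 * M 2 1 + N 2 3 * M 3 1 = 0 := by
    have h := congrFun (congrFun hNM 2) 1
    simpa [Matrix.mul_apply, Fin.sum_univ_four, Matrix.one_apply] using h
  have hnm22 : N 2 0 * M 0 2 + N 2 1 * M 1 2 + N 2 2 * M 2 2 + N 2 3 * M 3 2 = 1 := by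
    have h := congrFun (congrFun hNM 2) 2
    simpa [Matrix.mul_apply, Fin.sum_univ_four, Matrix.one_apply] using h
  have hnm23 : N 2 0 * M 0 3 + N 2 1 * M 1 3 + N 2 2 * M 2 3 + N 2 3 * M 3 3 = 0 := by
    have h := congrFun (congrFun hNM 2) 3
    simpa [Matrix.mul_apply, Fin.sum_univ_four, Matrix.one_apply] using h
  have hnm30 : N 3 0 * M 0 0 + N 3 1 * M 1 0 + N 3 2 * M 2 0 + N 3 3 * M 3 0 = 0 := by
    have h := congrFun (congrFun hNM 3) 0
    simpa [Matrix.mul_apply, Fin.sum_univ_four, Matrix.one_apply] using h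
  have hnm31 : N 3 0 * M 0 1 + N 3 1 * M 1 1 + N 3 2 * M 2 1 + N 3 3 * M 3 1 = 0 := by
    have h := congrFun (congrFun hNM 3) 1
    simpa [Matrix.mul_apply, Fin.sum_univ_four, Matrix.one_apply] using h
  have hnm32 : N 3 0 * M 0 2 + N 3 1 * M 1 2 + N 3 2 * M 2 2 + N 3 3 * M 3 2 = 0 := by
    have h := congrFun (congrFun hNM 3) 2
    simpa [Matrix.mul_apply, Fin.sum_univ_four, Matrix.one_apply] using h
  have hnm33 : N 3 0 * M 0 3 + N 3 1 * M 1 3 + N 3 2 * M 2 3 + N 3 3 * M 3 3 = 1 := by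
    have h := congrFun (congrFun hNM 3) 3
    simpa [Matrix.mul_apply, Fin.sum_univ_four, Matrix.one_apply] using h
  have hm2_00 : M 0 0 * M 0 0 + M 0 1 * M 1 0 + M 0 2 * M 2 0 + M 0 3 * M 3 0 = t := by
    have h := congrFun (congrFun ht 0) 0
    simpa [Matrix.mul_apply, Fin.sum_univ_four, Matrix.smul_apply, Matrix.one_apply] using h
  have hm2_11 : M 1 0 * M 0 1 + M 1 1 * M 1 1 + M 1 2 * M 2 1 + M 1 3 * M 3 1 = t := by
    have h := congrFun (congrFun ht 1) 1
    simpa [Matrix.mul_apply, Fin.sum_univ_four, Matrix.smul_apply, Matrix.one_apply] using h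
  have hm2_22 : M 2 0 * M 0 2 + M 2 1 * M 1 2 + M 2 2 * M 2 2 + M 2 3 * M 3 2 = t := by
    have h := congrFun (congrFun ht 2) 2
    simpa [Matrix.mul_apply, Fin.sum_univ_four, Matrix.smul_apply, Matrix.one_apply] using h
  have hm2_33 : M 3 0 * M 0 3 + M 3 1 * M 1 3 + M 3 2 * M 2 3 + M 3 3 * M 3 3 = t := by
    have h := congrFun (congrFun ht 3) 3
    simpa [Matrix.mul_apply, Fin.sum_univ_four, Matrix.smul_apply, Matrix.one_apply] using h
  have hm2_10 : M 1 0 * M 0 0 + M 1 1 * M 1 0 + M 1 2 * M 2 0 + M 1 3 * M 3 0 = 0 := by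
    have h := congrFun (congrFun ht 1) 0
    simpa [Matrix.mul_apply, Fin.sum_univ_four, Matrix.smul_apply, Matrix.one_apply] using h
  have hm2_20 : M 2 0 * M 0 0 + M 2 1 * M 1 0 + M 2 2 * M 2 0 + M 2 3 * M 3 0 = 0 := by
    have h := congrFun (congrFun ht 2) 0
    simpa [Matrix.mul_apply, Fin.sum_univ_four, Matrix.smul_apply, Matrix.one_apply] using h
  have hD00 : M 1 0 * M 2 0 * M 0 0 + M 0 0 * M 2 0 * M 1 0 + M 0 0 * M 1 0 * M 2 0 + 3 * M 3 0 ^ 2 * M 3 0 = 0 := by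
    linear_combination (2/3 : ℂ) * hFe 2 0 0 0 - (2/3 : ℂ) * hFe 0 0 0 0 - (1/12 : ℂ) * hFe 3 0 0 0 + (1/12 : ℂ) * hFe (-1) 0 0 0
  have hD01 : M 1 0 * M 2 0 * M 0 1 + M 0 0 * M 2 0 * M 1 1 + M 0 0 * M 1 0 * M 2 1 + 3 * M 3 0 ^ 2 * M 3 1 = 0 := by
    linear_combination (2/3 : ℂ) * hFe 1 1 0 0 - (2/3 : ℂ) * hFe 1 (-1) 0 0 - (1/12 : ℂ) * hFe 1 2 0 0 + (1/12 : ℂ) * hFe 1 (-2) 0 0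
  have hD02 : M 1 0 * M 2 0 * M 0 2 + M 0 0 * M 2 0 * M 1 2 + M 0 0 * M 1 0 * M 2 2 + 3 * M 3 0 ^ 2 * M 3 2 = 0 := by
    linear_combination (2/3 : ℂ) * hFe 1 0 1 0 - (2/3 : ℂ) * hFe 1 0 (-1) 0 - (1/12 : ℂ) * hFe 1 0 2 0 + (1/12 : ℂ) * hFe 1 0 (-2) 0
  have hD03 : M 1 0 * M 2 0 * M 0 3 + M 0 0 * M 2 0 * M 1 3 + M 0 0 * M 1 0 * M 2 3 + 3 * M 3 0 ^ 2 * M 3 3 = 0 := by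
    linear_combination (2/3 : ℂ) * hFe 1 0 0 1 - (2/3 : ℂ) * hFe 1 0 0 (-1) - (1/12 : ℂ) * hFe 1 0 0 2 + (1/12 : ℂ) * hFe 1 0 0 (-2)
  have hz00 : M 1 0 * M 2 0 = 0 := by
    linear_combination N 0 0 * hD00 + N 1 0 * hD01 + N 2 0 * hD02 + N 3 0 * hD03 - (M 1 0 * M 2 0) * hmn00 - (M 0 0 * M 2 0) * hmn10 - (M 0 0 * M 1 0) * hmn20 - (3 * M 3 0 ^ 2) * hmn30
  have hz01 : M 0 0 * M 2 0 = 0 := by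
    linear_combination N 0 1 * hD00 + N 1 1 * hD01 + N 2 1 * hD02 + N 3 1 * hD03 - (M 1 0 * M 2 0) * hmn01 - (M 0 0 * M 2 0) * hmn11 - (M 0 0 * M 1 0) * hmn21 - (3 * M 3 0 ^ 2) * hmn31
  have hz02 : M 0 0 * M 1 0 = 0 := by
    linear_combination N 0 2 * hD00 + N 1 2 * hD01 + N 2 2 * hD02 + N 3 2 * hD03 - (M 1 0 * M 2 0) * hmn02 - (M 0 0 * M 2 0) * hmn12 - (M 0 0 * M 1 0) * hmn22 - (3 * M 3 0 ^ 2) * hmn32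
  have hz03 : 3 * M 3 0 ^ 2 = 0 := by
    linear_combination N 0 3 * hD00 + N 1 3 * hD01 + N 2 3 * hD02 + N 3 3 * hD03 - (M 1 0 * M 2 0) * hmn03 - (M 0 0 * M 2 0) * hmn13 - (M 0 0 * M 1 0) * hmn23 - (3 * M 3 0 ^ 2) * hmn33
  have s3_0 : M 3 0 = 0 := sq_eq_zero_iff.mp (by linear_combination (1/3 : ℂ) * hz03)
  have hnz0 : ¬(M 0 0 = 0 ∧ M 1 0 = 0 ∧ M 2 0 = 0) := by
    rintro ⟨u0, u1, u2⟩
    have q := hnm00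
    rw [u0, u1, u2, s3_0] at q
    simp at q
  have hcol0 : (M 0 0 ≠ 0 ∧ M 1 0 = 0 ∧ M 2 0 = 0) ∨ (M 0 0 = 0 ∧ M 1 0 ≠ 0 ∧ M 2 0 = 0) ∨ (M 0 0 = 0 ∧ M 1 0 = 0 ∧ M 2 0 ≠ 0) := by
    rcases mul_eq_zero.mp hz02 with h | h <;> rcases mul_eq_zero.mp hz01 with h' | h' <;>
      rcases mul_eq_zero.mp hz00 with h'' | h'' <;> tauto
  have hD10 : M 1 1 * M 2 1 * M 0 0 + M 0 1 * M 2 1 * M 1 0 + M 0 1 * M 1 1 * M 2 0 + 3 * M 3 1 ^ 2 * M 3 0 = 0 := by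
    linear_combination (2/3 : ℂ) * hFe 1 1 0 0 - (2/3 : ℂ) * hFe (-1) 1 0 0 - (1/12 : ℂ) * hFe 2 1 0 0 + (1/12 : ℂ) * hFe (-2) 1 0 0
  have hD11 : M 1 1 * M 2 1 * M 0 1 + M 0 1 * M 2 1 * M 1 1 + M 0 1 * M 1 1 * M 2 1 + 3 * M 3 1 ^ 2 * M 3 1 = 0 := by
    linear_combination (2/3 : ℂ) * hFe 0 2 0 0 - (2/3 : ℂ) * hFe 0 0 0 0 - (1/12 : ℂ) * hFe 0 3 0 0 + (1/12 : ℂ) * hFe 0 (-1) 0 0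
  have hD12 : M 1 1 * M 2 1 * M 0 2 + M 0 1 * M 2 1 * M 1 2 + M 0 1 * M 1 1 * M 2 2 + 3 * M 3 1 ^ 2 * M 3 2 = 0 := by
    linear_combination (2/3 : ℂ) * hFe 0 1 1 0 - (2/3 : ℂ) * hFe 0 1 (-1) 0 - (1/12 : ℂ) * hFe 0 1 2 0 + (1/12 : ℂ) * hFe 0 1 (-2) 0
  have hD13 : M 1 1 * M 2 1 * M 0 3 + M 0 1 * M 2 1 * M 1 3 + M 0 1 * M 1 1 * M 2 3 + 3 * M 3 1 ^ 2 * M 3 3 = 0 := by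
    linear_combination (2/3 : ℂ) * hFe 0 1 0 1 - (2/3 : ℂ) * hFe 0 1 0 (-1) - (1/12 : ℂ) * hFe 0 1 0 2 + (1/12 : ℂ) * hFe 0 1 0 (-2)
  have hz10 : M 1 1 * M 2 1 = 0 := by
    linear_combination N 0 0 * hD10 + N 1 0 * hD11 + N 2 0 * hD12 + N 3 0 * hD13 - (M 1 1 * M 2 1) * hmn00 - (M 0 1 * M 2 1) * hmn10 - (M 0 1 * M 1 1) * hmn20 - (3 * M 3 1 ^ 2) * hmn30
  have hz11 : M 0 1 * M 2 1 = 0 := by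
    linear_combination N 0 1 * hD10 + N 1 1 * hD11 + N 2 1 * hD12 + N 3 1 * hD13 - (M 1 1 * M 2 1) * hmn01 - (M 0 1 * M 2 1) * hmn11 - (M 0 1 * M 1 1) * hmn21 - (3 * M 3 1 ^ 2) * hmn31
  have hz12 : M 0 1 * M 1 1 = 0 := by
    linear_combination N 0 2 * hD10 + N 1 2 * hD11 + N 2 2 * hD12 + N 3 2 * hD13 - (M 1 1 * M 2 1) * hmn02 - (M 0 1 * M 2 1) * hmn12 - (M 0 1 * M 1 1) * hmn22 - (3 * M 3 1 ^ 2) * hmn32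
  have hz13 : 3 * M 3 1 ^ 2 = 0 := by
    linear_combination N 0 3 * hD10 + N 1 3 * hD11 + N 2 3 * hD12 + N 3 3 * hD13 - (M 1 1 * M 2 1) * hmn03 - (M 0 1 * M 2 1) * hmn13 - (M 0 1 * M 1 1) * hmn23 - (3 * M 3 1 ^ 2) * hmn33
  have s3_1 : M 3 1 = 0 := sq_eq_zero_iff.mp (by linear_combination (1/3 : ℂ) * hz13)
  have hnz1 : ¬(M 0 1 = 0 ∧ M 1 1 = 0 ∧ M 2 1 = 0) := by
    rintro ⟨u0, u1, u2⟩
    have q := hnm11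
    rw [u0, u1, u2, s3_1] at q
    simp at q
  have hcol1 : (M 0 1 ≠ 0 ∧ M 1 1 = 0 ∧ M 2 1 = 0) ∨ (M 0 1 = 0 ∧ M 1 1 ≠ 0 ∧ M 2 1 = 0) ∨ (M 0 1 = 0 ∧ M 1 1 = 0 ∧ M 2 1 ≠ 0) := by
    rcases mul_eq_zero.mp hz12 with h | h <;> rcases mul_eq_zero.mp hz11 with h' | h' <;>
      rcases mul_eq_zero.mp hz10 with h'' | h'' <;> tauto
  have hD20 : M 1 2 * M 2 2 * M 0 0 + M 0 2 * M 2 2 * M 1 0 + M 0 2 * M 1 2 * M 2 0 + 3 * M 3 2 ^ 2 * M 3 0 = 0 := by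
    linear_combination (2/3 : ℂ) * hFe 1 0 1 0 - (2/3 : ℂ) * hFe (-1) 0 1 0 - (1/12 : ℂ) * hFe 2 0 1 0 + (1/12 : ℂ) * hFe (-2) 0 1 0
  have hD21 : M 1 2 * M 2 2 * M 0 1 + M 0 2 * M 2 2 * M 1 1 + M 0 2 * M 1 2 * M 2 1 + 3 * M 3 2 ^ 2 * M 3 1 = 0 := by
    linear_combination (2/3 : ℂ) * hFe 0 1 1 0 - (2/3 : ℂ) * hFe 0 (-1) 1 0 - (1/12 : ℂ) * hFe 0 2 1 0 + (1/12 : ℂ) * hFe 0 (-2) 1 0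
  have hD22 : M 1 2 * M 2 2 * M 0 2 + M 0 2 * M 2 2 * M 1 2 + M 0 2 * M 1 2 * M 2 2 + 3 * M 3 2 ^ 2 * M 3 2 = 0 := by
    linear_combination (2/3 : ℂ) * hFe 0 0 2 0 - (2/3 : ℂ) * hFe 0 0 0 0 - (1/12 : ℂ) * hFe 0 0 3 0 + (1/12 : ℂ) * hFe 0 0 (-1) 0
  have hD23 : M 1 2 * M 2 2 * M 0 3 + M 0 2 * M 2 2 * M 1 3 + M 0 2 * M 1 2 * M 2 3 + 3 * M 3 2 ^ 2 * M 3 3 = 0 := by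
    linear_combination (2/3 : ℂ) * hFe 0 0 1 1 - (2/3 : ℂ) * hFe 0 0 1 (-1) - (1/12 : ℂ) * hFe 0 0 1 2 + (1/12 : ℂ) * hFe 0 0 1 (-2)
  have hz20 : M 1 2 * M 2 2 = 0 := by
    linear_combination N 0 0 * hD20 + N 1 0 * hD21 + N 2 0 * hD22 + N 3 0 * hD23 - (M 1 2 * M 2 2) * hmn00 - (M 0 2 * M 2 2) * hmn10 - (M 0 2 * M 1 2) * hmn20 - (3 * M 3 2 ^ 2) * hmn30
  have hz21 : M 0 2 * M 2 2 = 0 := by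
    linear_combination N 0 1 * hD20 + N 1 1 * hD21 + N 2 1 * hD22 + N 3 1 * hD23 - (M 1 2 * M 2 2) * hmn01 - (M 0 2 * M 2 2) * hmn11 - (M 0 2 * M 1 2) * hmn21 - (3 * M 3 2 ^ 2) * hmn31
  have hz22 : M 0 2 * M 1 2 = 0 := by
    linear_combination N 0 2 * hD20 + N 1 2 * hD21 + N 2 2 * hD22 + N 3 2 * hD23 - (M 1 2 * M 2 2) * hmn02 - (M 0 2 * M 2 2) * hmn12 - (M 0 2 * M 1 2) * hmn22 - (3 * M 3 2 ^ 2) * hmn32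
  have hz23 : 3 * M 3 2 ^ 2 = 0 := by
    linear_combination N 0 3 * hD20 + N 1 3 * hD21 + N 2 3 * hD22 + N 3 3 * hD23 - (M 1 2 * M 2 2) * hmn03 - (M 0 2 * M 2 2) * hmn13 - (M 0 2 * M 1 2) * hmn23 - (3 * M 3 2 ^ 2) * hmn33
  have s3_2 : M 3 2 = 0 := sq_eq_zero_iff.mp (by linear_combination (1/3 : ℂ) * hz23)
  have hnz2 : ¬(M 0 2 = 0 ∧ M 1 2 = 0 ∧ M 2 2 = 0) := by
    rintro ⟨u0, u1, u2⟩
    have q := hnm22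
    rw [u0, u1, u2, s3_2] at q
    simp at q
  have hcol2 : (M 0 2 ≠ 0 ∧ M 1 2 = 0 ∧ M 2 2 = 0) ∨ (M 0 2 = 0 ∧ M 1 2 ≠ 0 ∧ M 2 2 = 0) ∨ (M 0 2 = 0 ∧ M 1 2 = 0 ∧ M 2 2 ≠ 0) := by
    rcases mul_eq_zero.mp hz22 with h | h <;> rcases mul_eq_zero.mp hz21 with h' | h' <;>
      rcases mul_eq_zero.mp hz20 with h'' | h'' <;> tauto
  rcases hcol0 with ⟨f00, f10, f20⟩ | ⟨f00, f10, f20⟩ | ⟨f00, f10, f20⟩ <;> rcases hcol1 with ⟨f01, f11, f21⟩ | ⟨f01, f11, f21⟩ | ⟨f01, f11, f21⟩ <;>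
    rcases hcol2 with ⟨f02, f12, f22⟩ | ⟨f02, f12, f22⟩ | ⟨f02, f12, f22⟩
  · exact absurd (show M 0 0 = 0 by linear_combination M 0 1 * hnm10 - M 0 0 * hnm11 - M 0 1 * N 1 1 * f10 + M 0 0 * N 1 1 * f11 - M 0 1 * N 1 2 * f20 + M 0 0 * N 1 2 * f21 - M 0 1 * N 1 3 * s3_0 + M 0 0 * N 1 3 * s3_1) f00
  · exact absurd (show M 0 0 = 0 by linear_combination M 0 1 * hnm10 - M 0 0 * hnm11 - M 0 1 * N 1 1 * f10 + M 0 0 * N 1 1 * f11 - M 0 1 * N 1 2 * f20 + M 0 0 * N 1 2 * f21 - M 0 1 * N 1 3 * s3_0 + M 0 0 * N 1 3 * s3_1) f00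
  · exact absurd (show M 0 0 = 0 by linear_combination M 0 1 * hnm10 - M 0 0 * hnm11 - M 0 1 * N 1 1 * f10 + M 0 0 * N 1 1 * f11 - M 0 1 * N 1 2 * f20 + M 0 0 * N 1 2 * f21 - M 0 1 * N 1 3 * s3_0 + M 0 0 * N 1 3 * s3_1) f00
  · exact absurd (show M 0 0 = 0 by linear_combination M 0 2 * hnm20 - M 0 0 * hnm22 - M 0 2 * N 2 1 * f10 + M 0 0 * N 2 1 * f12 - M 0 2 * N 2 2 * f20 + M 0 0 * N 2 2 * f22 - M 0 2 * N 2 3 * s3_0 + M 0 0 * N 2 3 * s3_2) f00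
  · exact absurd (show M 1 1 = 0 by linear_combination M 1 2 * hnm21 - M 1 1 * hnm22 - M 1 2 * N 2 0 * f01 + M 1 1 * N 2 0 * f02 - M 1 2 * N 2 2 * f21 + M 1 1 * N 2 2 * f22 - M 1 2 * N 2 3 * s3_1 + M 1 1 * N 2 3 * s3_2) f11
  · simp only [f10, f20, f01, f21, f02, f12, s3_0, s3_1, s3_2, zero_mul, mul_zero, zero_add, add_zero] at hFe hGe
    have hw0 : M 0 3 = 0 := by
      have aux : M 1 1 * M 2 2 * M 0 3 = 0 := by
        linear_combination (2/3 : ℂ) * hFe 0 1 1 1 - (2/3 : ℂ) * hFe 0 1 1 (-1) - (1/12 : ℂ) * hFe 0 1 1 2 + (1/12 : ℂ) * hFe 0 1 1 (-2)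
      rcases mul_eq_zero.mp aux with h | h
      · rcases mul_eq_zero.mp h with h' | h'
        · exact absurd h' f11
        · exact absurd h' f22
      · exact h
    have hw1 : M 1 3 = 0 := by
      have aux : M 0 0 * M 2 2 * M 1 3 = 0 := by
        linear_combination (2/3 : ℂ) * hFe 1 0 1 1 - (2/3 : ℂ) * hFe 1 0 1 (-1) - (1/12 : ℂ) * hFe 1 0 1 2 + (1/12 : ℂ) * hFe 1 0 1 (-2)
      rcases mul_eq_zero.mp aux with h | h
      · rcases mul_eq_zero.mp h with h' | h'
        · exact absurd h' f00
        · exact absurd h' f22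
      · exact h
    have hw2 : M 2 3 = 0 := by
      have aux : M 0 0 * M 1 1 * M 2 3 = 0 := by
        linear_combination (2/3 : ℂ) * hFe 1 1 0 1 - (2/3 : ℂ) * hFe 1 1 0 (-1) - (1/12 : ℂ) * hFe 1 1 0 2 + (1/12 : ℂ) * hFe 1 1 0 (-2)
      rcases mul_eq_zero.mp aux with h | h
      · rcases mul_eq_zero.mp h with h' | h'
        · exact absurd h' f00
        · exact absurd h' f11
      · exact h
    simp only [hw0, hw1, hw2, zero_mul, mul_zero, zero_add, add_zero] at hGe
    have hmu3 : M 3 3 ^ 3 = d := by linear_combination hGe 0 0 0 1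
    have ql0 : M 0 0 = M 3 3 := by
      have q1 : a 0 * M 0 0 ^ 3 = a 0 * d := by linear_combination hGe 1 0 0 0
      have q2 : b 0 * (M 0 0 ^ 2 * M 3 3) = b 0 * d := by
        linear_combination (1/2 : ℂ) * hGe 1 0 0 1 - (1/2 : ℂ) * hGe 1 0 0 (-1) - hmu3
      have q3 : M 0 0 ^ 2 * M 0 0 = M 0 0 ^ 2 * M 3 3 := by
        linear_combination mul_left_cancel₀ (ha 0) q1 - mul_left_cancel₀ (hb 0) q2
      exact mul_left_cancel₀ (pow_ne_zero 2 f00) q3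
    have ql1 : M 1 1 = M 3 3 := by
      have q1 : a 1 * M 1 1 ^ 3 = a 1 * d := by linear_combination hGe 0 1 0 0
      have q2 : b 1 * (M 1 1 ^ 2 * M 3 3) = b 1 * d := by
        linear_combination (1/2 : ℂ) * hGe 0 1 0 1 - (1/2 : ℂ) * hGe 0 1 0 (-1) - hmu3
      have q3 : M 1 1 ^ 2 * M 1 1 = M 1 1 ^ 2 * M 3 3 := by
        linear_combination mul_left_cancel₀ (ha 1) q1 - mul_left_cancel₀ (hb 1) q2
      exact mul_left_cancel₀ (pow_ne_zero 2 f11) q3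
    have ql2 : M 2 2 = M 3 3 := by
      have q1 : a 2 * M 2 2 ^ 3 = a 2 * d := by linear_combination hGe 0 0 1 0
      have q2 : b 2 * (M 2 2 ^ 2 * M 3 3) = b 2 * d := by
        linear_combination (1/2 : ℂ) * hGe 0 0 1 1 - (1/2 : ℂ) * hGe 0 0 1 (-1) - hmu3
      have q3 : M 2 2 ^ 2 * M 2 2 = M 2 2 ^ 2 * M 3 3 := by
        linear_combination mul_left_cancel₀ (ha 2) q1 - mul_left_cancel₀ (hb 2) q2
      exact mul_left_cancel₀ (pow_ne_zero 2 f22) q3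
    exact absurd ⟨M 3 3, by ext i j; fin_cases i <;> fin_cases j <;> simp [Matrix.one_apply, f10, f20, f01, f21, f02, f12, s3_0, s3_1, s3_2, hw0, hw1, hw2, ql0, ql1, ql2]⟩ hns
  · exact absurd (show M 0 0 = 0 by linear_combination M 0 2 * hnm20 - M 0 0 * hnm22 - M 0 2 * N 2 1 * f10 + M 0 0 * N 2 1 * f12 - M 0 2 * N 2 2 * f20 + M 0 0 * N 2 2 * f22 - M 0 2 * N 2 3 * s3_0 + M 0 0 * N 2 3 * s3_2) f00
  · simp only [f10, f20, f01, f11, f02, f22, s3_0, s3_1, s3_2, zero_mul, mul_zero, zero_add, add_zero] at hFe hGe hm2_11 hm2_33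
    have hw0 : M 0 3 = 0 := by
      have aux : M 2 1 * M 1 2 * M 0 3 = 0 := by
        linear_combination (2/3 : ℂ) * hFe 0 1 1 1 - (2/3 : ℂ) * hFe 0 1 1 (-1) - (1/12 : ℂ) * hFe 0 1 1 2 + (1/12 : ℂ) * hFe 0 1 1 (-2)
      rcases mul_eq_zero.mp aux with h | h
      · rcases mul_eq_zero.mp h with h' | h'
        · exact absurd h' f21
        · exact absurd h' f12
      · exact h
    have hw1 : M 1 3 = 0 := by
      have aux : M 0 0 * M 2 1 * M 1 3 = 0 := by
        linear_combination (2/3 : ℂ) * hFe 1 1 0 1 - (2/3 : ℂ) * hFe 1 1 0 (-1) - (1/12 : ℂ) * hFe 1 1 0 2 + (1/12 : ℂ) * hFe 1 1 0 (-2)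
      rcases mul_eq_zero.mp aux with h | h
      · rcases mul_eq_zero.mp h with h' | h'
        · exact absurd h' f00
        · exact absurd h' f21
      · exact h
    have hw2 : M 2 3 = 0 := by
      have aux : M 0 0 * M 1 2 * M 2 3 = 0 := by
        linear_combination (2/3 : ℂ) * hFe 1 0 1 1 - (2/3 : ℂ) * hFe 1 0 1 (-1) - (1/12 : ℂ) * hFe 1 0 1 2 + (1/12 : ℂ) * hFe 1 0 1 (-2)
      rcases mul_eq_zero.mp aux with h | h
      · rcases mul_eq_zero.mp h with h' | h'
        · exact absurd h' f00
        · exact absurd h' f12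
      · exact h
    simp only [hw0, hw1, hw2, zero_mul, mul_zero, zero_add, add_zero] at hGe
    have hmu : M 3 3 ≠ 0 := by
      intro h
      have q := hnm33
      rw [hw0, hw1, hw2, h] at q
      simp at q
    have hmu3 : M 3 3 ^ 3 = d := by linear_combination hGe 0 0 0 1
    have hai : a 2 * M 2 1 ^ 3 = d * a 1 := by linear_combination hGe 0 1 0 0
    have hbj : b 1 * M 1 2 ^ 2 * M 3 3 = d * b 2 := by
      linear_combination (1/2 : ℂ) * hGe 0 0 1 1 - (1/2 : ℂ) * hGe 0 0 1 (-1) - hmu3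
    have h6 : M 2 1 * M 1 2 = M 3 3 ^ 2 := by linear_combination hm2_11 - hm2_33
    exact ⟨1, 2, by decide, key3A2 (a 1) (a 2) (b 1) (b 2) (M 2 1) (M 1 2) (M 3 3) d hmu hai hbj hmu3 h6⟩
  · exact absurd (show M 2 1 = 0 by linear_combination M 2 2 * hnm21 - M 2 1 * hnm22 - M 2 2 * N 2 0 * f01 + M 2 1 * N 2 0 * f02 - M 2 2 * N 2 1 * f11 + M 2 1 * N 2 1 * f12 - M 2 2 * N 2 3 * s3_1 + M 2 1 * N 2 3 * s3_2) f21
  · exact absurd (show M 0 1 = 0 by linear_combination M 0 2 * hnm21 - M 0 1 * hnm22 - M 0 2 * N 2 1 * f11 + M 0 1 * N 2 1 * f12 - M 0 2 * N 2 2 * f21 + M 0 1 * N 2 2 * f22 - M 0 2 * N 2 3 * s3_1 + M 0 1 * N 2 3 * s3_2) f01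
  · exact absurd (show M 1 0 = 0 by linear_combination M 1 2 * hnm20 - M 1 0 * hnm22 - M 1 2 * N 2 0 * f00 + M 1 0 * N 2 0 * f02 - M 1 2 * N 2 2 * f20 + M 1 0 * N 2 2 * f22 - M 1 2 * N 2 3 * s3_0 + M 1 0 * N 2 3 * s3_2) f10
  · simp only [f00, f20, f11, f21, f02, f12, s3_0, s3_1, s3_2, zero_mul, mul_zero, zero_add, add_zero] at hFe hGe hm2_00 hm2_33
    have hw0 : M 0 3 = 0 := by
      have aux : M 1 0 * M 2 2 * M 0 3 = 0 := by
        linear_combination (2/3 : ℂ) * hFe 1 0 1 1 - (2/3 : ℂ) * hFe 1 0 1 (-1) - (1/12 : ℂ) * hFe 1 0 1 2 + (1/12 : ℂ) * hFe 1 0 1 (-2)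
      rcases mul_eq_zero.mp aux with h | h
      · rcases mul_eq_zero.mp h with h' | h'
        · exact absurd h' f10
        · exact absurd h' f22
      · exact h
    have hw1 : M 1 3 = 0 := by
      have aux : M 0 1 * M 2 2 * M 1 3 = 0 := by
        linear_combination (2/3 : ℂ) * hFe 0 1 1 1 - (2/3 : ℂ) * hFe 0 1 1 (-1) - (1/12 : ℂ) * hFe 0 1 1 2 + (1/12 : ℂ) * hFe 0 1 1 (-2)
      rcases mul_eq_zero.mp aux with h | h
      · rcases mul_eq_zero.mp h with h' | h'
        · exact absurd h' f01
        · exact absurd h' f22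
      · exact h
    have hw2 : M 2 3 = 0 := by
      have aux : M 1 0 * M 0 1 * M 2 3 = 0 := by
        linear_combination (2/3 : ℂ) * hFe 1 1 0 1 - (2/3 : ℂ) * hFe 1 1 0 (-1) - (1/12 : ℂ) * hFe 1 1 0 2 + (1/12 : ℂ) * hFe 1 1 0 (-2)
      rcases mul_eq_zero.mp aux with h | h
      · rcases mul_eq_zero.mp h with h' | h'
        · exact absurd h' f10
        · exact absurd h' f01
      · exact h
    simp only [hw0, hw1, hw2, zero_mul, mul_zero, zero_add, add_zero] at hGe
    have hmu : M 3 3 ≠ 0 := by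
      intro h
      have q := hnm33
      rw [hw0, hw1, hw2, h] at q
      simp at q
    have hmu3 : M 3 3 ^ 3 = d := by linear_combination hGe 0 0 0 1
    have hai : a 1 * M 1 0 ^ 3 = d * a 0 := by linear_combination hGe 1 0 0 0
    have hbj : b 0 * M 0 1 ^ 2 * M 3 3 = d * b 1 := by
      linear_combination (1/2 : ℂ) * hGe 0 1 0 1 - (1/2 : ℂ) * hGe 0 1 0 (-1) - hmu3
    have h6 : M 1 0 * M 0 1 = M 3 3 ^ 2 := by linear_combination hm2_00 - hm2_33
    exact ⟨0, 1, by decide, key3A2 (a 0) (a 1) (b 0) (b 1) (M 1 0) (M 0 1) (M 3 3) d hmu hai hbj hmu3 h6⟩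
  · exact absurd (show M 1 0 = 0 by linear_combination M 1 1 * hnm10 - M 1 0 * hnm11 - M 1 1 * N 1 0 * f00 + M 1 0 * N 1 0 * f01 - M 1 1 * N 1 2 * f20 + M 1 0 * N 1 2 * f21 - M 1 1 * N 1 3 * s3_0 + M 1 0 * N 1 3 * s3_1) f10
  · exact absurd (show M 1 0 = 0 by linear_combination M 1 1 * hnm10 - M 1 0 * hnm11 - M 1 1 * N 1 0 * f00 + M 1 0 * N 1 0 * f01 - M 1 1 * N 1 2 * f20 + M 1 0 * N 1 2 * f21 - M 1 1 * N 1 3 * s3_0 + M 1 0 * N 1 3 * s3_1) f10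
  · exact absurd (show M 1 0 = 0 by linear_combination M 1 1 * hnm10 - M 1 0 * hnm11 - M 1 1 * N 1 0 * f00 + M 1 0 * N 1 0 * f01 - M 1 1 * N 1 2 * f20 + M 1 0 * N 1 2 * f21 - M 1 1 * N 1 3 * s3_0 + M 1 0 * N 1 3 * s3_1) f10
  · rcases mul_eq_zero.mp (show M 2 1 * M 1 0 = 0 by linear_combination hm2_20 - M 2 0 * f00 - M 2 2 * f20 - M 2 3 * s3_0) with h | h
    · exact absurd h f21
    · exact absurd h f10
  · exact absurd (show M 1 0 = 0 by linear_combination M 1 2 * hnm20 - M 1 0 * hnm22 - M 1 2 * N 2 0 * f00 + M 1 0 * N 2 0 * f02 - M 1 2 * N 2 2 * f20 + M 1 0 * N 2 2 * f22 - M 1 2 * N 2 3 * s3_0 + M 1 0 * N 2 3 * s3_2) f10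
  · exact absurd (show M 2 1 = 0 by linear_combination M 2 2 * hnm21 - M 2 1 * hnm22 - M 2 2 * N 2 0 * f01 + M 2 1 * N 2 0 * f02 - M 2 2 * N 2 1 * f11 + M 2 1 * N 2 1 * f12 - M 2 2 * N 2 3 * s3_1 + M 2 1 * N 2 3 * s3_2) f21
  · exact absurd (show M 0 1 = 0 by linear_combination M 0 2 * hnm21 - M 0 1 * hnm22 - M 0 2 * N 2 1 * f11 + M 0 1 * N 2 1 * f12 - M 0 2 * N 2 2 * f21 + M 0 1 * N 2 2 * f22 - M 0 2 * N 2 3 * s3_1 + M 0 1 * N 2 3 * s3_2) f01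
  · rcases mul_eq_zero.mp (show M 1 2 * M 2 0 = 0 by linear_combination hm2_10 - M 1 0 * f00 - M 1 1 * f10 - M 1 3 * s3_0) with h | h
    · exact absurd h f12
    · exact absurd h f20
  · exact absurd (show M 2 0 = 0 by linear_combination M 2 2 * hnm20 - M 2 0 * hnm22 - M 2 2 * N 2 0 * f00 + M 2 0 * N 2 0 * f02 - M 2 2 * N 2 1 * f10 + M 2 0 * N 2 1 * f12 - M 2 2 * N 2 3 * s3_0 + M 2 0 * N 2 3 * s3_2) f20
  · simp only [f00, f10, f01, f21, f12, f22, s3_0, s3_1, s3_2, zero_mul, mul_zero, zero_add, add_zero] at hFe hGe hm2_00 hm2_33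
    have hw0 : M 0 3 = 0 := by
      have aux : M 2 0 * M 1 1 * M 0 3 = 0 := by
        linear_combination (2/3 : ℂ) * hFe 1 1 0 1 - (2/3 : ℂ) * hFe 1 1 0 (-1) - (1/12 : ℂ) * hFe 1 1 0 2 + (1/12 : ℂ) * hFe 1 1 0 (-2)
      rcases mul_eq_zero.mp aux with h | h
      · rcases mul_eq_zero.mp h with h' | h'
        · exact absurd h' f20
        · exact absurd h' f11
      · exact h
    have hw1 : M 1 3 = 0 := by
      have aux : M 2 0 * M 0 2 * M 1 3 = 0 := by
        linear_combination (2/3 : ℂ) * hFe 1 0 1 1 - (2/3 : ℂ) * hFe 1 0 1 (-1) - (1/12 : ℂ) * hFe 1 0 1 2 + (1/12 : ℂ) * hFe 1 0 1 (-2)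
      rcases mul_eq_zero.mp aux with h | h
      · rcases mul_eq_zero.mp h with h' | h'
        · exact absurd h' f20
        · exact absurd h' f02
      · exact h
    have hw2 : M 2 3 = 0 := by
      have aux : M 1 1 * M 0 2 * M 2 3 = 0 := by
        linear_combination (2/3 : ℂ) * hFe 0 1 1 1 - (2/3 : ℂ) * hFe 0 1 1 (-1) - (1/12 : ℂ) * hFe 0 1 1 2 + (1/12 : ℂ) * hFe 0 1 1 (-2)
      rcases mul_eq_zero.mp aux with h | h
      · rcases mul_eq_zero.mp h with h' | h'
        · exact absurd h' f11
        · exact absurd h' f02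
      · exact h
    simp only [hw0, hw1, hw2, zero_mul, mul_zero, zero_add, add_zero] at hGe
    have hmu : M 3 3 ≠ 0 := by
      intro h
      have q := hnm33
      rw [hw0, hw1, hw2, h] at q
      simp at q
    have hmu3 : M 3 3 ^ 3 = d := by linear_combination hGe 0 0 0 1
    have hai : a 2 * M 2 0 ^ 3 = d * a 0 := by linear_combination hGe 1 0 0 0
    have hbj : b 0 * M 0 2 ^ 2 * M 3 3 = d * b 2 := by
      linear_combination (1/2 : ℂ) * hGe 0 0 1 1 - (1/2 : ℂ) * hGe 0 0 1 (-1) - hmu3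
    have h6 : M 2 0 * M 0 2 = M 3 3 ^ 2 := by linear_combination hm2_00 - hm2_33
    exact ⟨0, 2, by decide, key3A2 (a 0) (a 2) (b 0) (b 2) (M 2 0) (M 0 2) (M 3 3) d hmu hai hbj hmu3 h6⟩
  · exact absurd (show M 1 1 = 0 by linear_combination M 1 2 * hnm21 - M 1 1 * hnm22 - M 1 2 * N 2 0 * f01 + M 1 1 * N 2 0 * f02 - M 1 2 * N 2 2 * f21 + M 1 1 * N 2 2 * f22 - M 1 2 * N 2 3 * s3_1 + M 1 1 * N 2 3 * s3_2) f11
  · exact absurd (show M 2 0 = 0 by linear_combination M 2 2 * hnm20 - M 2 0 * hnm22 - M 2 2 * N 2 0 * f00 + M 2 0 * N 2 0 * f02 - M 2 2 * N 2 1 * f10 + M 2 0 * N 2 1 * f12 - M 2 2 * N 2 3 * s3_0 + M 2 0 * N 2 3 * s3_2) f20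
  · exact absurd (show M 2 0 = 0 by linear_combination M 2 1 * hnm10 - M 2 0 * hnm11 - M 2 1 * N 1 0 * f00 + M 2 0 * N 1 0 * f01 - M 2 1 * N 1 1 * f10 + M 2 0 * N 1 1 * f11 - M 2 1 * N 1 3 * s3_0 + M 2 0 * N 1 3 * s3_1) f20
  · exact absurd (show M 2 0 = 0 by linear_combination M 2 1 * hnm10 - M 2 0 * hnm11 - M 2 1 * N 1 0 * f00 + M 2 0 * N 1 0 * f01 - M 2 1 * N 1 1 * f10 + M 2 0 * N 1 1 * f11 - M 2 1 * N 1 3 * s3_0 + M 2 0 * N 1 3 * s3_1) f20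
  · exact absurd (show M 2 0 = 0 by linear_combination M 2 1 * hnm10 - M 2 0 * hnm11 - M 2 1 * N 1 0 * f00 + M 2 0 * N 1 0 * f01 - M 2 1 * N 1 1 * f10 + M 2 0 * N 1 1 * f11 - M 2 1 * N 1 3 * s3_0 + M 2 0 * N 1 3 * s3_1) f20
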